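/- Let A be a complex Banach algebra possessing a contractive approximate identity. Every A-universal Hilbert A-module is a generator for the category of Hilbert A-modules. -/

import Mathlib

noncomputable section

open Filter

open scoped ENNReal

/-- A contractive approximate identity for a (possibly non-unital) normed algebra `A`:
a net `(e i)`, indexed by a nontrivial filter, with `‖e i‖ ≤ 1` for all `i`, such that
`e i * a → a` and `a * e i → a` in norm for every `a ∈ A`. -/
def HasCAI (A : Type) [NonUnitalNormedRing A] : Prop :=
  ∃ (ι : Type) (l : Filter ι) (e : ι → A), l.NeBot ∧ (∀ i, ‖e i‖ ≤ 1) ∧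
    ∀ a : A, Tendsto (fun i => e i * a) l (nhds a) ∧ Tendsto (fun i => a * e i) l (nhds a)

variable (A : Type) [NonUnitalNormedRing A] [NormedSpace ℂ A] [IsScalarTower ℂ A A]
  [SMulCommClass ℂ A A]

/-- A Hilbert `A`-module structure on the Hilbert space `K`: a contractive algebra
homomorphism `π : A → B(K)` which is nondegenerate, i.e. the linear span of
`{π a x : a ∈ A, x ∈ K}` is dense in `K`. -/
def IsHilbertRep {K : Type} [NormedAddCommGroup K] [InnerProductSpace ℂ K] [CompleteSpace K]
    (π : A →ₙₐ[ℂ] (K →L[ℂ] K)) : Prop :=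
  (∀ a : A, ‖π a‖ ≤ ‖a‖) ∧
  Dense ((Submodule.span ℂ {x : K | ∃ (a : A) (y : K), π a y = x} : Submodule ℂ K) : Set K)

/-- A bounded `A`-module map between Hilbert `A`-modules. -/
def IsModuleMap {K L : Type} [NormedAddCommGroup K] [InnerProductSpace ℂ K]
    [NormedAddCommGroup L] [InnerProductSpace ℂ L]
    (πK : A →ₙₐ[ℂ] (K →L[ℂ] K)) (πL : A →ₙₐ[ℂ] (L →L[ℂ] L)) (T : K →L[ℂ] L) : Prop :=
  ∀ (a : A) (x : K), T (πK a x) = πL a (T x)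

/-- `H` is a generator for the category of Hilbert `A`-modules: for all Hilbert
`A`-modules `K`, `L` and every nonzero bounded `A`-module map `R : K → L` there is a
bounded `A`-module map `V : H → K` with `R ∘ V ≠ 0`. -/
def IsGenerator {H : Type} [NormedAddCommGroup H] [InnerProductSpace ℂ H] [CompleteSpace H]
    (πH : A →ₙₐ[ℂ] (H →L[ℂ] H)) : Prop :=
  ∀ (K L : Type) [NormedAddCommGroup K] [InnerProductSpace ℂ K] [CompleteSpace K]
    [NormedAddCommGroup L] [InnerProductSpace ℂ L] [CompleteSpace L],
    ∀ (πK : A →ₙₐ[ℂ] (K →L[ℂ] K)) (πL : A →ₙₐ[ℂ] (L →L[ℂ] L)),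
      IsHilbertRep A πK → IsHilbertRep A πL →
      ∀ R : K →L[ℂ] L, IsModuleMap A πK πL R → R ≠ 0 →
        ∃ V : H →L[ℂ] K, IsModuleMap A πH πK V ∧ R.comp V ≠ 0

theorem diag_memℓp {H : Type} [NormedAddCommGroup H] [InnerProductSpace ℂ H] {ι : Type}
    (T : H →L[ℂ] H) (f : lp (fun _ : ι => H) 2) : Memℓp (fun i => T (f i)) 2 := by
  apply memℓp_gen
  have hf : Summable fun i => ‖f i‖ ^ (2 : ℝ≥0∞).toReal :=
    (lp.memℓp f).summable (by norm_num)
  refine Summable.of_nonneg_of_le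
    (fun i => Real.rpow_nonneg (norm_nonneg _) _) (fun i => ?_)
    (hf.mul_left (‖T‖ ^ (2 : ℝ≥0∞).toReal))
  calc ‖T (f i)‖ ^ (2 : ℝ≥0∞).toReal ≤ (‖T‖ * ‖f i‖) ^ (2 : ℝ≥0∞).toReal :=
        Real.rpow_le_rpow (norm_nonneg _) (T.le_opNorm _) (by norm_num)
    _ = _ := Real.mul_rpow (norm_nonneg _) (norm_nonneg _)

/-- The diagonal amplification of an operator on `H` to the `ℓ²`-direct sum of `ι`
copies of `H`. -/
def lpDiag {H : Type} [NormedAddCommGroup H] [InnerProductSpace ℂ H] (ι : Type)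
    (T : H →L[ℂ] H) : lp (fun _ : ι => H) 2 →L[ℂ] lp (fun _ : ι => H) 2 := by
  refine LinearMap.mkContinuous
    { toFun := fun f => ⟨fun i => T (f i), diag_memℓp T f⟩
      map_add' := ?_
      map_smul' := ?_ } ‖T‖ ?_
  · intro f g; ext i; simp <;> rfl
  · intro c f; ext i; simp
  · intro f
    apply lp.norm_le_of_tsum_le (by norm_num) (mul_nonneg (norm_nonneg T) (norm_nonneg f))
    have hsum : Summable fun i => ‖T (f i)‖ ^ (2 : ℝ≥0∞).toReal :=
      (diag_memℓp T f).summable (by norm_num)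
    have hf : Summable fun i => ‖f i‖ ^ (2 : ℝ≥0∞).toReal :=
      (lp.memℓp f).summable (by norm_num)
    have h1 : ∀ i, ‖T (f i)‖ ^ (2 : ℝ≥0∞).toReal ≤
        ‖T‖ ^ (2 : ℝ≥0∞).toReal * ‖f i‖ ^ (2 : ℝ≥0∞).toReal := fun i =>
      calc ‖T (f i)‖ ^ (2 : ℝ≥0∞).toReal ≤ (‖T‖ * ‖f i‖) ^ (2 : ℝ≥0∞).toReal :=
            Real.rpow_le_rpow (norm_nonneg _) (T.le_opNorm _) (by norm_num)
        _ = _ := Real.mul_rpow (norm_nonneg _) (norm_nonneg _)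
    calc (∑' i, ‖T (f i)‖ ^ (2 : ℝ≥0∞).toReal)
        ≤ ∑' i, ‖T‖ ^ (2 : ℝ≥0∞).toReal * ‖f i‖ ^ (2 : ℝ≥0∞).toReal :=
          Summable.tsum_le_tsum h1 hsum (hf.mul_left _)
      _ = ‖T‖ ^ (2 : ℝ≥0∞).toReal * ∑' i, ‖f i‖ ^ (2 : ℝ≥0∞).toReal := tsum_mul_left
      _ = ‖T‖ ^ (2 : ℝ≥0∞).toReal * ‖f‖ ^ (2 : ℝ≥0∞).toReal := by
          rw [lp.norm_rpow_eq_tsum (by norm_num) f]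
      _ = (‖T‖ * ‖f‖) ^ (2 : ℝ≥0∞).toReal :=
          (Real.mul_rpow (norm_nonneg _) (norm_nonneg _)).symm

/-- The multiple `H^(ι)` of a representation: the `ℓ²`-direct sum of `ι` copies of `H`,
with the coordinatewise action of `A`. -/
def multipleRep {H : Type} [NormedAddCommGroup H] [InnerProductSpace ℂ H]
    (πH : A →ₙₐ[ℂ] (H →L[ℂ] H)) (ι : Type) :
    A →ₙₐ[ℂ] (lp (fun _ : ι => H) 2 →L[ℂ] lp (fun _ : ι => H) 2) where
  toFun a := lpDiag ι (πH a)
  map_add' a b := by ext f i; simp [lpDiag] <;> rfl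
  map_smul' c a := by ext f i; simp [lpDiag]
  map_zero' := by ext f i; simp [lpDiag]
  map_mul' a b := by ext f i; simp [lpDiag, ContinuousLinearMap.mul_apply]

/-- `H` is an `A`-universal Hilbert `A`-module: every Hilbert `A`-module `K` is spatially
equivalent to an `A`-complemented closed `A`-invariant subspace of some multiple `H^(ι)`;
here this is expressed by an isometric `A`-intertwiner `U : K → H^(ι)` together with a
continuous idempotent `A`-module map `P` of `H^(ι)` onto the range of `U`. -/
def IsUniversal {H : Type} [NormedAddCommGroup H] [InnerProductSpace ℂ H] [CompleteSpace H]
    (πH : A →ₙₐ[ℂ] (H →L[ℂ] H)) : Prop :=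
  ∀ (K : Type) [NormedAddCommGroup K] [InnerProductSpace ℂ K] [CompleteSpace K],
    ∀ (πK : A →ₙₐ[ℂ] (K →L[ℂ] K)), IsHilbertRep A πK →
      ∃ (ι : Type) (U : K →ₗᵢ[ℂ] lp (fun _ : ι => H) 2)
        (P : lp (fun _ : ι => H) 2 →L[ℂ] lp (fun _ : ι => H) 2),
        (∀ (a : A) (x : K), U (πK a x) = multipleRep A πH ι a (U x)) ∧
        IsModuleMap A (multipleRep A πH ι) (multipleRep A πH ι) P ∧
        P.comp P = P ∧ Set.range ⇑P = Set.range ⇑U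

/-! Universality makes every Hilbert `A`-module `K` a quotient of a multiple `H^(ι)`: the
idempotent `P` followed by the inverse of the embedding `U` is a surjective module map
`Q : H^(ι) → K`. If `R ≠ 0` then `R ∘ Q ≠ 0`, and as `H^(ι)` is the closed span of its
coordinate copies of `H`, `R ∘ Q` is nonzero on one of them; that coordinate inclusion
followed by `Q` is the required module map `H → K`. -/

theorem LinearIsometry.exists_comp_eq_of_range_subset {𝕜 K M N : Type*} [NormedField 𝕜]
    [NormedAddCommGroup K] [NormedSpace 𝕜 K] [NormedAddCommGroup M] [NormedSpace 𝕜 M]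
    [NormedAddCommGroup N] [NormedSpace 𝕜 N] (U : K →ₗᵢ[𝕜] M) (P : N →L[𝕜] M)
    (hP : ∀ n, P n ∈ LinearMap.range U.toLinearMap) : ∃ Q : N →L[𝕜] K, ∀ n, U (Q n) = P n :=
  ⟨(U.equivRange.symm : LinearMap.range U.toLinearMap →L[𝕜] K).comp (P.codRestrict _ hP),
    fun n => congrArg Subtype.val (U.equivRange.apply_symm_apply ⟨P n, hP n⟩)⟩

theorem lp.exists_comp_single_ne_zero {𝕜 ι K L : Type*} {E : ι → Type*} [NormedRing 𝕜]
    [∀ i, NormedAddCommGroup (E i)] [∀ i, Module 𝕜 (E i)] [∀ i, IsBoundedSMul 𝕜 (E i)]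
    [DecidableEq ι] {p : ℝ≥0∞} [Fact (1 ≤ p)] (hp : p ≠ ⊤)
    [AddCommGroup K] [Module 𝕜 K] [TopologicalSpace K]
    [AddCommGroup L] [Module 𝕜 L] [TopologicalSpace L] [T2Space L]
    {Q : lp E p →L[𝕜] K} (hQ : Function.Surjective Q) {R : K →L[𝕜] L} (hR : R ≠ 0) :
    ∃ i, R.comp (Q.comp (lp.singleContinuousLinearMap 𝕜 E p i)) ≠ 0 := by
  by_contra! h
  have hRQ : R.comp Q = 0 := lp.ext_continuousLinearMap hp fun i => by
    simpa [ContinuousLinearMap.comp_assoc] using h i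
  refine hR (ContinuousLinearMap.ext fun x => ?_)
  obtain ⟨m, rfl⟩ := hQ x
  exact DFunLike.congr_fun hRQ m

section ModuleMaps

variable {A : Type} [NonUnitalNormedRing A] [NormedSpace ℂ A]

theorem IsModuleMap.comp {K L N : Type} [NormedAddCommGroup K] [InnerProductSpace ℂ K]
    [NormedAddCommGroup L] [InnerProductSpace ℂ L] [NormedAddCommGroup N] [InnerProductSpace ℂ N]
    {πK : A →ₙₐ[ℂ] (K →L[ℂ] K)} {πL : A →ₙₐ[ℂ] (L →L[ℂ] L)} {πN : A →ₙₐ[ℂ] (N →L[ℂ] N)}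
    {S : L →L[ℂ] N} {T : K →L[ℂ] L} (hS : IsModuleMap A πL πN S) (hT : IsModuleMap A πK πL T) :
    IsModuleMap A πK πN (S.comp T) := fun a x => by
  rw [ContinuousLinearMap.comp_apply, hT, hS, ContinuousLinearMap.comp_apply]

theorem isModuleMap_lpSingle {H : Type} [NormedAddCommGroup H] [InnerProductSpace ℂ H]
    (πH : A →ₙₐ[ℂ] (H →L[ℂ] H)) {ι : Type} [DecidableEq ι] (j : ι) :
    IsModuleMap A πH (multipleRep A πH ι)
      (lp.singleContinuousLinearMap ℂ (fun _ : ι => H) 2 j) := by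
  intro a x
  ext i
  rcases eq_or_ne i j with rfl | hij
  · simp [multipleRep, lpDiag]
  · simp [multipleRep, lpDiag, hij]

theorem IsUniversal.exists_surjective_isModuleMap {H : Type} [NormedAddCommGroup H]
    [InnerProductSpace ℂ H] [CompleteSpace H] {πH : A →ₙₐ[ℂ] (H →L[ℂ] H)}
    (huniv : IsUniversal A πH) {K : Type} [NormedAddCommGroup K] [InnerProductSpace ℂ K]
    [CompleteSpace K] {πK : A →ₙₐ[ℂ] (K →L[ℂ] K)} (hK : IsHilbertRep A πK) :
    ∃ (ι : Type) (Q : lp (fun _ : ι => H) 2 →L[ℂ] K),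
      IsModuleMap A (multipleRep A πH ι) πK Q ∧ Function.Surjective Q := by
  obtain ⟨ι, U, P, hU, hP, hPP, hrange⟩ := huniv K πK hK
  obtain ⟨Q, hQ⟩ := U.exists_comp_eq_of_range_subset P fun m => hrange.subset ⟨m, rfl⟩
  refine ⟨ι, Q, fun a m => U.injective ?_, fun x => ⟨U x, U.injective ?_⟩⟩
  · rw [hQ, hP, ← hQ, hU]
  · obtain ⟨m, hm⟩ := hrange.superset ⟨x, rfl⟩
    rw [hQ, ← hm, ← ContinuousLinearMap.comp_apply, hPP]

end ModuleMaps

theorem universal_is_generator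
    (H : Type) [NormedAddCommGroup H] [InnerProductSpace ℂ H] [CompleteSpace H]
    (πH : A →ₙₐ[ℂ] (H →L[ℂ] H)) (huniv : IsUniversal A πH) :
    IsGenerator A πH := by
  classical
  intro K L _ _ _ _ _ _ πK πL hK _ R _ hR
  obtain ⟨ι, Q, hQ, hQsurj⟩ := huniv.exists_surjective_isModuleMap hK
  obtain ⟨j, hj⟩ := lp.exists_comp_single_ne_zero ENNReal.ofNat_ne_top hQsurj hR
  exact ⟨_, hQ.comp (isModuleMap_lpSingle πH j), hj⟩
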